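/- Lipschitz rate of convergence: if $\Phi$ and $g$ are Lipschitz continuous on the compact path space $\Omega$, Assumption (no-arbitrage and non-redundancy of options) holds, and the discretized option prices satisfy $|c^n| = O(2^{-n})$, then $|\underline\pi^n(\Phi) - \underline\pi(\Phi)| = O(2^{-n})$. -/

import Mathlib

/-!
Both discretization errors are controlled by the size of near-optimal sub-hedges. A sub-hedge
on `Ω` restricts to `Ωⁿ` at the cost `∑ |hᵢ| · |cⁿ|`; a sub-hedge on `Ωⁿ` is transported to `Ω`
through the dyadic projection `φⁿ`, at a cost of order `2⁻ⁿ` times the Lipschitz constants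
and the sizes of `H` and `h`.

The dynamic position is bounded by an adversary: after each date the price jumps to the end of
`[aₜ₊₁, bₜ₊₁]` that hurts `H` most, so every trade loses at least the gap `δ` per unit, and a
bound `C` on the losses forces `|H| ≤ C · E` by a discrete Gronwall argument. The static
position is bounded by non-redundancy of the options, made uniform by compactness: a limit of
normalized near-counterexamples along an ultrafilter would contradict the assumption.
-/

/-- A dynamic trading strategy adapted on the path set `A`:
`H t` depends only on the path up to time `t`. -/
def AdaptedOn (A : Set (ℕ → ℝ)) (H : ℕ → (ℕ → ℝ) → ℝ) : Prop :=
  ∀ t : ℕ, ∀ s ∈ A, ∀ s' ∈ A, (∀ j, j ≤ t → s j = s' j) → H t s = H t s'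

/-- A stopping time on the path set `A` with horizon `T`. -/
def IsStopOn (T : ℕ) (A : Set (ℕ → ℝ)) (τ : (ℕ → ℝ) → ℕ) : Prop :=
  (∀ s ∈ A, τ s ≤ T) ∧
  ∀ s ∈ A, ∀ s' ∈ A, (∀ j, j ≤ τ s → s j = s' j) → τ s' = τ s

/-- The terminal gains `(H · S)_T` of dynamic trading along the path `s`. -/
noncomputable def gains (T : ℕ) (H : ℕ → (ℕ → ℝ) → ℝ) (s : ℕ → ℝ) : ℝ :=
  ∑ t ∈ Finset.range T, H t s * (s (t + 1) - s t)
/-- The compact path space `Ω = {1} × [a 1, b 1] × ⋯ × [a T, b T]`. -/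
def pathSpace (T : ℕ) (a b : ℕ → ℝ) : Set (ℕ → ℝ) :=
  {s | s 0 = 1 ∧ ∀ i, 1 ≤ i → i ≤ T → a i ≤ s i ∧ s i ≤ b i}

/-- The dyadic discretization `Ωⁿ = Ω ∩ {0, 1/2ⁿ, 2/2ⁿ, …}^{T+1}`. -/
def gridSpace (T n : ℕ) (a b : ℕ → ℝ) : Set (ℕ → ℝ) :=
  {s ∈ pathSpace T a b | ∀ j ≤ T, ∃ k : ℕ, s j = (k : ℝ) / 2 ^ n}

/-- The sub-hedging price of the American option `Φ` on the path set `A`,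
with options `g` statically traded at prices `c`. -/
noncomputable def subPrice (T e : ℕ) (A : Set (ℕ → ℝ)) (Φ : ℕ → (ℕ → ℝ) → ℝ)
    (g : (ℕ → ℝ) → Fin e → ℝ) (c : Fin e → ℝ) : ℝ :=
  sSup {x : ℝ | ∃ (H : ℕ → (ℕ → ℝ) → ℝ) (h : Fin e → ℝ) (τ : (ℕ → ℝ) → ℕ),
    AdaptedOn A H ∧ IsStopOn T A τ ∧
    ∀ s ∈ A, x ≤ Φ (τ s) s + gains T H s + ∑ i, h i * (g s i - c i)}

open Finset Filter Topology

noncomputable def supDist (T : ℕ) (s s' : ℕ → ℝ) : ℝ :=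
  (range (T + 1)).sup' ⟨0, by simp⟩ fun j => |s j - s' j|

lemma supDist_le {T : ℕ} {s s' : ℕ → ℝ} {r : ℝ} (h : ∀ j ≤ T, |s j - s' j| ≤ r) :
    supDist T s s' ≤ r :=
  sup'_le _ _ fun j hj => h j (mem_range_succ_iff.1 hj)

lemma nonneg_of_abs_sub_le_mul_supDist {T : ℕ} {L : ℝ} {f : (ℕ → ℝ) → ℝ}
    (hf : ∀ s s', |f s - f s'| ≤ L * supDist T s s') : 0 ≤ L := by
  have hd : 1 ≤ supDist T 0 1 :=
    calc (1 : ℝ) = |(0 : ℕ → ℝ) 0 - (1 : ℕ → ℝ) 0| := by simp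
      _ ≤ supDist T 0 1 := le_sup' (fun j => |(0 : ℕ → ℝ) j - (1 : ℕ → ℝ) j|) (by simp)
  exact nonneg_of_mul_nonneg_left ((abs_nonneg _).trans (hf 0 1)) (one_pos.trans_le hd)

lemma abs_sum_mul_le {ι : Type*} (I : Finset ι) (h v : ι → ℝ) {V : ℝ} (hv : ∀ i ∈ I, |v i| ≤ V) :
    |∑ i ∈ I, h i * v i| ≤ (∑ i ∈ I, |h i|) * V := by
  rw [sum_mul]
  refine (abs_sum_le_sum_abs _ _).trans (sum_le_sum fun i hi => ?_)
  rw [abs_mul]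
  exact mul_le_mul_of_nonneg_left (hv i hi) (abs_nonneg _)

lemma le_mul_one_add_pow_of_le_add_mul_sum {f : ℕ → ℝ} {C q : ℝ} {T : ℕ} (hq : 0 ≤ q)
    (hf : ∀ t < T, f t ≤ C + q * ∑ u ∈ range t, f u) : ∀ t < T, f t ≤ C * (1 + q) ^ t := by
  intro t
  induction t using Nat.strong_induction_on with
  | _ t ih =>
    intro ht
    have hgeom := geom_sum_mul (1 + q) t
    rw [add_sub_cancel_left] at hgeom
    calc f t ≤ C + q * ∑ u ∈ range t, C * (1 + q) ^ u :=
          (hf t ht).trans <| by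
            gcongr with u hu
            exact ih u (mem_range.1 hu) ((mem_range.1 hu).trans ht)
      _ = C * (1 + q) ^ t := by rw [← mul_sum]; linear_combination C * hgeom

lemma csSup_le_csSup_add {S S' : Set ℝ} {θ δ : ℝ} (hθ : θ ∈ S') (hS : S.Nonempty)
    (hS' : BddAbove S') (hδ : 0 ≤ δ) (h : ∀ x ∈ S, θ < x → x - δ ∈ S') :
    sSup S ≤ sSup S' + δ :=
  csSup_le hS fun x hx => (le_or_gt x θ).elim
    (fun hxθ => by linarith [le_csSup hS' hθ])
    (fun hθx => by linarith [le_csSup hS' (h x hx hθx)])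

lemma gains_const_mul (T : ℕ) (k : ℝ) (H : ℕ → (ℕ → ℝ) → ℝ) (s : ℕ → ℝ) :
    gains T (fun t s => k * H t s) s = k * gains T H s := by
  simp only [gains, mul_sum, mul_assoc]

lemma gains_const (T : ℕ) (H : ℕ → (ℕ → ℝ) → ℝ) (y : ℝ) : gains T H (fun _ => y) = 0 := by
  simp [gains]

lemma abs_gains_sub_le {T : ℕ} {H H' : ℕ → (ℕ → ℝ) → ℝ} {s s' : ℕ → ℝ} {M r : ℝ}
    (hHH' : ∀ t < T, H t s = H' t s') (hM : ∀ t < T, |H t s| ≤ M)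
    (hr : ∀ j ≤ T, |s j - s' j| ≤ r) :
    |gains T H s - gains T H' s'| ≤ 2 * T * M * r := by
  rw [gains, gains, ← sum_sub_distrib]
  refine (abs_sum_le_sum_abs _ _).trans ?_
  calc ∑ t ∈ range T, |H t s * (s (t + 1) - s t) - H' t s' * (s' (t + 1) - s' t)|
      ≤ ∑ _t ∈ range T, M * (r + r) := sum_le_sum fun t ht => by
        have ht := mem_range.1 ht
        rw [← hHH' t ht, ← mul_sub, abs_mul]
        refine mul_le_mul (hM t ht) ?_ (abs_nonneg _) ((abs_nonneg _).trans (hM t ht))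
        calc |s (t + 1) - s t - (s' (t + 1) - s' t)|
            = |(s (t + 1) - s' (t + 1)) - (s t - s' t)| := by ring_nf
          _ ≤ |s (t + 1) - s' (t + 1)| + |s t - s' t| := abs_sub _ _
          _ ≤ r + r := add_le_add (hr _ ht) (hr _ ht.le)
    _ = 2 * T * M * r := by rw [sum_const, card_range, nsmul_eq_mul]; ring

lemma AdaptedOn.const_mul {A : Set (ℕ → ℝ)} {H : ℕ → (ℕ → ℝ) → ℝ} (hH : AdaptedOn A H) (k : ℝ) :
    AdaptedOn A (fun t s => k * H t s) :=
  fun t s hs s' hs' hss' => by simp only [hH t s hs s' hs' hss']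

lemma AdaptedOn.mono {A B : Set (ℕ → ℝ)} {H : ℕ → (ℕ → ℝ) → ℝ} (hH : AdaptedOn A H)
    (hBA : B ⊆ A) : AdaptedOn B H :=
  fun t s hs s' hs' => hH t s (hBA hs) s' (hBA hs')

lemma IsStopOn.mono {T : ℕ} {A B : Set (ℕ → ℝ)} {τ : (ℕ → ℝ) → ℕ} (hτ : IsStopOn T A τ)
    (hBA : B ⊆ A) : IsStopOn T B τ :=
  ⟨fun s hs => hτ.1 s (hBA hs), fun s hs s' hs' => hτ.2 s (hBA hs) s' (hBA hs')⟩

def UpdateClosed (T : ℕ) (a b : ℕ → ℝ) (A : Set (ℕ → ℝ)) : Prop :=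
  ∀ s ∈ A, ∀ t < T,
    Function.update s (t + 1) (a (t + 1)) ∈ A ∧ Function.update s (t + 1) (b (t + 1)) ∈ A

def StrategyBound (T : ℕ) (A : Set (ℕ → ℝ)) (E : ℝ) : Prop :=
  ∀ (H : ℕ → (ℕ → ℝ) → ℝ) (C : ℝ), 0 ≤ C → AdaptedOn A H →
    (∀ s ∈ A, -C ≤ gains T H s) → ∀ t < T, ∀ s ∈ A, |H t s| ≤ C * E

lemma mul_ite_sub_le_neg_abs_mul {x y a' b' δ : ℝ} (ha : a' + δ ≤ y) (hb : y + δ ≤ b') :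
    x * ((if 0 ≤ x then a' else b') - y) ≤ -(|x| * δ) := by
  split_ifs with hx
  · rw [abs_of_nonneg hx]; nlinarith
  · rw [abs_of_neg (not_le.1 hx)]; nlinarith

section Adversary

variable {T : ℕ} {a b : ℕ → ℝ} {A : Set (ℕ → ℝ)} {H : ℕ → (ℕ → ℝ) → ℝ} {δ : ℝ}

lemma exists_adversarial_path (hA : UpdateClosed T a b A)
    (hbox : ∀ s ∈ A, ∀ t < T, a t ≤ s t ∧ s t ≤ b t)
    (hgap : ∀ t < T, δ ≤ a t - a (t + 1) ∧ δ ≤ b (t + 1) - b t) (hH : AdaptedOn A H)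
    {t : ℕ} (ht : t ≤ T) {s : ℕ → ℝ} (hs : s ∈ A) :
    ∃ p ∈ A, (∀ j ≤ t, p j = s j) ∧
      ∑ u ∈ Ico t T, H u p * (p (u + 1) - p u) ≤ -(δ * ∑ u ∈ Ico t T, |H u p|) := by
  obtain ⟨k, hk⟩ := Nat.exists_eq_add_of_le ht
  induction k generalizing t s with
  | zero => exact ⟨s, hs, fun _ _ => rfl, by simp [hk]⟩
  | succ k ih =>
    have htT : t < T := by omega
    set x := if 0 ≤ H t s then a (t + 1) else b (t + 1) with hx_def
    have hx : Function.update s (t + 1) x ∈ A := by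
      rw [hx_def]; split_ifs
      exacts [(hA s hs t htT).1, (hA s hs t htT).2]
    obtain ⟨p, hp, hps, hsum⟩ := ih htT hx (by omega)
    have hpt : ∀ j ≤ t, p j = s j := fun j hj => by
      rw [hps j (by omega), Function.update_of_ne (by omega)]
    have hstep : H t p * (p (t + 1) - p t) ≤ -(|H t p| * δ) := by
      rw [hH t p hp s hs hpt, hps (t + 1) le_rfl, Function.update_self, hpt t le_rfl]
      obtain ⟨has, hsb⟩ := hbox s hs t htT
      obtain ⟨hga, hgb⟩ := hgap t htT
      exact mul_ite_sub_le_neg_abs_mul (by linarith) (by linarith)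
    refine ⟨p, hp, hpt, ?_⟩
    rw [sum_eq_sum_Ico_succ_bot htT, sum_eq_sum_Ico_succ_bot htT]
    linarith

lemma mul_abs_le_of_neg_le_gains (hA : UpdateClosed T a b A)
    (hbox : ∀ s ∈ A, ∀ t < T, a t ≤ s t ∧ s t ≤ b t)
    (hgap : ∀ t < T, δ ≤ a t - a (t + 1) ∧ δ ≤ b (t + 1) - b t) (hδ : 0 ≤ δ)
    (hH : AdaptedOn A H) {C D : ℝ} (hD : ∀ s ∈ A, ∀ u < T, |s (u + 1) - s u| ≤ D)
    (hC : ∀ s ∈ A, -C ≤ gains T H s) {t : ℕ} (ht : t < T) {s : ℕ → ℝ} (hs : s ∈ A) :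
    δ * |H t s| ≤ C + D * ∑ u ∈ range t, |H u s| := by
  obtain ⟨p, hp, hps, hsum⟩ := exists_adversarial_path hA hbox hgap hH ht.le hs
  have hHt : H t p = H t s := hH t p hp s hs hps
  have hpast : ∑ u ∈ range t, H u p * (p (u + 1) - p u) ≤ D * ∑ u ∈ range t, |H u s| := by
    rw [mul_sum]
    refine sum_le_sum fun u hu => ?_
    have hu := mem_range.1 hu
    rw [hH u p hp s hs fun j hj => hps j (by omega), hps (u + 1) hu, hps u hu.le, mul_comm D]
    exact (le_abs_self _).trans
      (by rw [abs_mul]; exact mul_le_mul_of_nonneg_left (hD s hs u (by omega)) (abs_nonneg _))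
  have hfuture : δ * |H t s| ≤ δ * ∑ u ∈ Ico t T, |H u p| := by
    rw [← hHt]
    exact mul_le_mul_of_nonneg_left
      (single_le_sum (fun u _ => abs_nonneg (H u p)) (mem_Ico.2 ⟨le_rfl, ht⟩)) hδ
  have hgains := hC p hp
  rw [gains, ← sum_range_add_sum_Ico _ ht.le] at hgains
  linarith

lemma strategyBound_of_updateClosed (hA : UpdateClosed T a b A)
    (hbox : ∀ s ∈ A, ∀ t < T, a t ≤ s t ∧ s t ≤ b t)
    (hgap : ∀ t < T, δ ≤ a t - a (t + 1) ∧ δ ≤ b (t + 1) - b t) (hδ : 0 < δ) {D : ℝ}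
    (hD0 : 0 ≤ D) (hD : ∀ s ∈ A, ∀ u < T, |s (u + 1) - s u| ≤ D) :
    StrategyBound T A ((1 + D / δ) ^ T / δ) := by
  intro H C hC hH hgains t ht s hs
  have hrec : ∀ t < T, |H t s| ≤ C / δ + D / δ * ∑ u ∈ range t, |H u s| := fun t ht => by
    have := mul_abs_le_of_neg_le_gains hA hbox hgap hδ.le hH hD hgains ht hs
    calc |H t s| ≤ (C + D * ∑ u ∈ range t, |H u s|) / δ := by
          rw [le_div_iff₀ hδ]; linarith
      _ = _ := by ring
  have hq : 0 ≤ D / δ := div_nonneg hD0 hδ.le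
  calc |H t s| ≤ C / δ * (1 + D / δ) ^ t := le_mul_one_add_pow_of_le_add_mul_sum hq hrec t ht
    _ ≤ C / δ * (1 + D / δ) ^ T :=
        mul_le_mul_of_nonneg_left (pow_le_pow_right₀ (by linarith) ht.le) (div_nonneg hC hδ.le)
    _ = C * ((1 + D / δ) ^ T / δ) := by ring

end Adversary

structure IsSubHedge {e : ℕ} (T : ℕ) (A : Set (ℕ → ℝ)) (Φ : ℕ → (ℕ → ℝ) → ℝ)
    (g : (ℕ → ℝ) → Fin e → ℝ) (c : Fin e → ℝ) (H : ℕ → (ℕ → ℝ) → ℝ) (h : Fin e → ℝ)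
    (τ : (ℕ → ℝ) → ℕ) (x : ℝ) : Prop where
  adapted : AdaptedOn A H
  isStop : IsStopOn T A τ
  le : ∀ s ∈ A, x ≤ Φ (τ s) s + gains T H s + ∑ i, h i * (g s i - c i)

def subHedgeLevels {e : ℕ} (T : ℕ) (A : Set (ℕ → ℝ)) (Φ : ℕ → (ℕ → ℝ) → ℝ)
    (g : (ℕ → ℝ) → Fin e → ℝ) (c : Fin e → ℝ) : Set ℝ :=
  {x | ∃ H h τ, IsSubHedge T A Φ g c H h τ x}

/-- Modelled on `Ωⁿ ⊆ Ω` with the projection `φⁿ : Ω → Ωⁿ` at scale `r = 2⁻ⁿ`. -/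
structure IsDiscretization (T : ℕ) (P A : Set (ℕ → ℝ)) (ψ : (ℕ → ℝ) → ℕ → ℝ) (r : ℝ) :
    Prop where
  subset : A ⊆ P
  mapsTo : Set.MapsTo ψ P A
  nonanticipative : ∀ s s' t, (∀ j ≤ t, s j = s' j) → ∀ j ≤ t, ψ s j = ψ s' j
  abs_sub_le : ∀ s ∈ P, ∀ j ≤ T, |ψ s j - s j| ≤ r

lemma IsDiscretization.refl (T : ℕ) (P : Set (ℕ → ℝ)) : IsDiscretization T P P id 0 :=
  ⟨subset_rfl, Set.mapsTo_id P, fun _ _ _ h => h, fun _ _ _ _ => by simp⟩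

lemma IsDiscretization.mono {T : ℕ} {P A : Set (ℕ → ℝ)} {ψ : (ℕ → ℝ) → ℕ → ℝ} {r r' : ℝ}
    (hψ : IsDiscretization T P A ψ r) (hr : r ≤ r') : IsDiscretization T P A ψ r' :=
  { hψ with abs_sub_le := fun s hs j hj => (hψ.abs_sub_le s hs j hj).trans hr }

section SubHedge

variable {T e : ℕ} {A P : Set (ℕ → ℝ)} {Φ : ℕ → (ℕ → ℝ) → ℝ} {g : (ℕ → ℝ) → Fin e → ℝ}
  {c : Fin e → ℝ} {H : ℕ → (ℕ → ℝ) → ℝ} {h : Fin e → ℝ} {τ : (ℕ → ℝ) → ℕ} {x : ℝ}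

lemma subPrice_eq_sSup : subPrice T e A Φ g c = sSup (subHedgeLevels T A Φ g c) := by
  simp only [subPrice, subHedgeLevels]
  congr
  ext x
  exact ⟨fun ⟨H, h, τ, hH, hτ, hx⟩ => ⟨H, h, τ, hH, hτ, hx⟩,
    fun ⟨H, h, τ, hH, hτ, hx⟩ => ⟨H, h, τ, hH, hτ, hx⟩⟩

lemma neg_mem_subHedgeLevels {M : ℝ} (hΦ : ∀ t ≤ T, ∀ s ∈ A, |Φ t s| ≤ M) :
    -M ∈ subHedgeLevels T A Φ g c :=
  ⟨fun _ _ => 0, 0, fun _ => 0, fun _ _ _ _ _ _ => rfl,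
    ⟨fun _ _ => T.zero_le, fun _ _ _ _ _ => rfl⟩,
    fun s hs => by simpa [gains] using neg_le_of_abs_le (hΦ 0 T.zero_le s hs)⟩

namespace IsSubHedge

lemma mono_level (hs : IsSubHedge T A Φ g c H h τ x) {x' : ℝ} (hx : x' ≤ x) :
    IsSubHedge T A Φ g c H h τ x' :=
  { hs with le := fun s hsA => hx.trans (hs.le s hsA) }

lemma restrict (hs : IsSubHedge T A Φ g c H h τ x) {B : Set (ℕ → ℝ)} (hBA : B ⊆ A) :
    IsSubHedge T B Φ g c H h τ x :=
  ⟨hs.adapted.mono hBA, hs.isStop.mono hBA, fun s hsB => hs.le s (hBA hsB)⟩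

lemma change_price (hs : IsSubHedge T A Φ g c H h τ x) {c' : Fin e → ℝ} {r : ℝ}
    (hc : ∀ i, |c i - c' i| ≤ r) :
    IsSubHedge T A Φ g c' H h τ (x - (∑ i, |h i|) * r) := by
  refine { hs with le := fun s hsA => ?_ }
  have hsplit : ∑ i, h i * (g s i - c' i) = ∑ i, h i * (g s i - c i) + ∑ i, h i * (c i - c' i) := by
    rw [← sum_add_distrib]; exact sum_congr rfl fun i _ => by ring
  have := abs_sum_mul_le univ h (fun i => c i - c' i) fun i _ => hc i
  linarith [hs.le s hsA, (abs_le.1 this).1]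

lemma neg_le_gains (hs : IsSubHedge T A Φ g c H h τ x) {M G : ℝ}
    (hΦ : ∀ t ≤ T, ∀ s ∈ A, |Φ t s| ≤ M) (hg : ∀ s ∈ A, ∀ i, |g s i - c i| ≤ G) {s : ℕ → ℝ}
    (hsA : s ∈ A) : x - M - (∑ i, |h i|) * G ≤ gains T H s := by
  have hΦs := (abs_le.1 (hΦ _ (hs.isStop.1 s hsA) s hsA)).2
  have hgs := (abs_le.1 (abs_sum_mul_le univ h _ fun i _ => hg s hsA i)).2
  linarith [hs.le s hsA]

lemma abs_le_of_strategyBound (hs : IsSubHedge T A Φ g c H h τ x) {E M G : ℝ}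
    (hA : StrategyBound T A E) (hΦ : ∀ t ≤ T, ∀ s ∈ A, |Φ t s| ≤ M)
    (hg : ∀ s ∈ A, ∀ i, |g s i - c i| ≤ G) (hM : 0 ≤ M) (hG : 0 ≤ G) (hx : -M ≤ x) :
    ∀ t < T, ∀ s ∈ A, |H t s| ≤ (2 * M + (∑ i, |h i|) * G) * E :=
  hA H _ (by positivity) hs.adapted fun s hsA => by linarith [hs.neg_le_gains hΦ hg hsA]

lemma comp (hs : IsSubHedge T A Φ g c H h τ x) {ψ : (ℕ → ℝ) → ℕ → ℝ} {r L M : ℝ}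
    (hψ : IsDiscretization T P A ψ r)
    (hΦ : ∀ t ≤ T, ∀ s s', |Φ t s - Φ t s'| ≤ L * supDist T s s')
    (hg : ∀ i s s', |g s i - g s' i| ≤ L * supDist T s s') (hL : 0 ≤ L)
    (hM : ∀ t < T, ∀ s ∈ A, |H t s| ≤ M) :
    IsSubHedge T P Φ g c (fun t s => H t (ψ s)) h (fun s => τ (ψ s))
      (x - (L + 2 * T * M + (∑ i, |h i|) * L) * r) := by
  refine ⟨fun t s hs₁ s' hs₁' hss' =>
      hs.adapted t _ (hψ.mapsTo hs₁) _ (hψ.mapsTo hs₁') (hψ.nonanticipative s s' t hss'),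
    ⟨fun s hsP => hs.isStop.1 _ (hψ.mapsTo hsP), fun s hsP s' hsP' hss' =>
      hs.isStop.2 _ (hψ.mapsTo hsP) _ (hψ.mapsTo hsP') (hψ.nonanticipative s s' _ hss')⟩,
    fun s hsP => ?_⟩
  have hσ := hψ.mapsTo hsP
  have hd : L * supDist T (ψ s) s ≤ L * r :=
    mul_le_mul_of_nonneg_left (supDist_le (hψ.abs_sub_le s hsP)) hL
  have hΦs := (abs_le.1 (hΦ _ (hs.isStop.1 _ hσ) (ψ s) s)).2
  have hgains := (abs_le.1 (abs_gains_sub_le (H := fun t s => H t (ψ s)) (s := s) (s' := ψ s)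
    (fun _ _ => rfl) (fun t ht => hM t ht _ hσ)
    (fun j hj => by rw [abs_sub_comm]; exact hψ.abs_sub_le s hsP j hj))).1
  have hsplit : ∑ i, h i * (g s i - c i) =
      ∑ i, h i * (g (ψ s) i - c i) + ∑ i, h i * (g s i - g (ψ s) i) := by
    rw [← sum_add_distrib]; exact sum_congr rfl fun i _ => by ring
  have hgs := (abs_le.1 (abs_sum_mul_le univ h (fun i => g s i - g (ψ s) i) (V := L * r)
    fun i _ => by rw [abs_sub_comm]; exact (hg i (ψ s) s).trans hd)).1
  linarith [hs.le _ hσ]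

end IsSubHedge

lemma bddAbove_subHedgeLevels (h1 : (fun _ => (1 : ℝ)) ∈ A) {M G N : ℝ}
    (hΦ : ∀ t ≤ T, ∀ s ∈ A, |Φ t s| ≤ M) (hg : ∀ s ∈ A, ∀ i, |g s i - c i| ≤ G) (hG : 0 ≤ G)
    (hN : ∀ H h τ x, IsSubHedge T A Φ g c H h τ x → -M ≤ x → ∑ i, |h i| ≤ N) :
    BddAbove (subHedgeLevels T A Φ g c) := by
  refine ⟨max (-M) (M + N * G), fun x ⟨H, h, τ, hs⟩ => ?_⟩
  rcases le_or_gt (-M) x with hx | hx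
  · have hval := hs.le _ h1
    rw [gains_const] at hval
    have hΦ1 := (abs_le.1 (hΦ _ (hs.isStop.1 _ h1) _ h1)).2
    have hg1 := (abs_le.1 (abs_sum_mul_le univ h _ fun i _ => hg _ h1 i)).2
    have := mul_le_mul_of_nonneg_right (hN H h τ x hs hx) hG
    exact le_max_of_le_right (by linarith)
  · exact le_max_of_le_left hx.le

end SubHedge

lemma exists_tendsto_of_abs_le (𝒰 : Ultrafilter ℕ) {x : ℕ → ℝ} {V : ℝ} (hx : ∀ k, |x k| ≤ V) :
    ∃ l, Tendsto x 𝒰 (𝓝 l) := by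
  obtain ⟨l, -, hl⟩ := isCompact_Icc.ultrafilter_le_nhds (𝒰.map x)
    (by
      rw [le_principal_iff, Ultrafilter.mem_coe, Ultrafilter.mem_map]
      exact univ_mem' fun k => abs_le.1 (hx k))
  exact ⟨l, by rwa [Ultrafilter.coe_map] at hl⟩

lemma exists_uniform_loss {T e : ℕ} {A : Set (ℕ → ℝ)} {g : (ℕ → ℝ) → Fin e → ℝ}
    (hAss : ∀ (H : ℕ → (ℕ → ℝ) → ℝ) (h : Fin e → ℝ), AdaptedOn A H → h ≠ 0 →
      ∃ s ∈ A, gains T H s + ∑ i, h i * g s i < 0) (N : ℝ) :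
    ∃ ε > 0, ∀ H : ℕ → (ℕ → ℝ) → ℝ, AdaptedOn A H → (∀ t < T, ∀ s ∈ A, |H t s| ≤ N) →
      ∀ u : Fin e → ℝ, ∑ i, |u i| = 1 → ∃ s ∈ A, gains T H s + ∑ i, u i * g s i ≤ -ε := by
  by_contra! hcon
  choose Hs hHs hHsN us hus hval using fun k : ℕ => hcon (1 / (k + 1)) Nat.one_div_pos_of_nat
  let 𝒰 := Ultrafilter.of (atTop : Filter ℕ)
  have hH : ∀ t < T, ∀ s ∈ A, ∃ l, Tendsto (fun k => Hs k t s) 𝒰 (𝓝 l) :=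
    fun t ht s hs => exists_tendsto_of_abs_le 𝒰 fun k => hHsN k t ht s hs
  choose! HL hHL using hH
  have hu : ∀ i, ∃ l, Tendsto (fun k => us k i) 𝒰 (𝓝 l) := fun i =>
    exists_tendsto_of_abs_le 𝒰 fun k =>
      (single_le_sum (fun j _ => abs_nonneg (us k j)) (mem_univ i)).trans (hus k).le
  choose uL huL using hu
  set H' : ℕ → (ℕ → ℝ) → ℝ := fun t s => if t < T then HL t s else 0 with hH'
  have hH'adapted : AdaptedOn A H' := by
    intro t s hs s' hs' hss'
    simp only [hH']
    split_ifs with ht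
    · refine tendsto_nhds_unique (hHL t ht s hs) ?_
      simpa only [hHs _ t s hs s' hs' hss'] using hHL t ht s' hs'
    · rfl
  have huL_norm : ∑ i, |uL i| = 1 :=
    tendsto_nhds_unique (tendsto_finsetSum _ fun i _ => (huL i).abs)
      (by simpa only [hus] using tendsto_const_nhds)
  obtain ⟨s, hs, hneg⟩ := hAss H' uL hH'adapted (by rintro rfl; simp at huL_norm)
  have hlim : Tendsto (fun k => gains T (Hs k) s + ∑ i, us k i * g s i) 𝒰
      (𝓝 (gains T H' s + ∑ i, uL i * g s i)) := by
    refine (tendsto_finsetSum _ fun t ht => ?_).add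
      (tendsto_finsetSum _ fun i _ => (huL i).mul_const _)
    simp only [hH', if_pos (mem_range.1 ht)]
    exact (hHL t (mem_range.1 ht) s hs).mul_const _
  have hlow : Tendsto (fun k : ℕ => -(1 / ((k : ℝ) + 1))) 𝒰 (𝓝 0) := by
    have := (tendsto_one_div_add_atTop_nhds_zero_nat (𝕜 := ℝ)).neg.mono_left
      (Ultrafilter.of_le atTop)
    rwa [neg_zero] at this
  exact hneg.not_ge (le_of_tendsto_of_tendsto hlow hlim
    (Eventually.of_forall fun k => (hval k s hs).le))

section Pricing

variable {T e : ℕ} {P : Set (ℕ → ℝ)} {Φ : ℕ → (ℕ → ℝ) → ℝ} {g : (ℕ → ℝ) → Fin e → ℝ}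
  {L M E : ℝ}

lemma mul_sum_abs_le_of_uniform_loss {N₁ ε : ℝ}
    (hloss : ∀ H : ℕ → (ℕ → ℝ) → ℝ, AdaptedOn P H → (∀ t < T, ∀ s ∈ P, |H t s| ≤ N₁) →
      ∀ u : Fin e → ℝ, ∑ i, |u i| = 1 → ∃ s ∈ P, gains T H s + ∑ i, u i * g s i ≤ -ε)
    {H : ℕ → (ℕ → ℝ) → ℝ} {h : Fin e → ℝ} {τ : (ℕ → ℝ) → ℕ} {x : ℝ}
    (hs : IsSubHedge T P Φ g 0 H h τ x) (hMΦ : ∀ t ≤ T, ∀ s ∈ P, |Φ t s| ≤ M)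
    (hS : 0 < ∑ i, |h i|) (hH : ∀ t < T, ∀ s ∈ P, |H t s| ≤ (∑ i, |h i|) * N₁) :
    ε * ∑ i, |h i| ≤ M - x := by
  set S := ∑ i, |h i| with hS_def
  obtain ⟨s, hsP, hs_loss⟩ := hloss (fun t s => S⁻¹ * H t s) (hs.adapted.const_mul _)
    (fun t ht s hsP => by
      rw [abs_mul, abs_inv, abs_of_pos hS, inv_mul_le_iff₀ hS]
      exact hH t ht s hsP)
    (fun i => S⁻¹ * h i)
    (by simp only [abs_mul, abs_inv, abs_of_pos hS, ← mul_sum, ← hS_def, inv_mul_cancel₀ hS.ne'])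
  have hscaled : S⁻¹ * (gains T H s + ∑ i, h i * g s i) ≤ -ε := by
    rw [mul_add, ← gains_const_mul, mul_sum]
    simpa only [mul_assoc] using hs_loss
  have hval := hs.le s hsP
  simp only [Pi.zero_apply, sub_zero] at hval
  have hΦs := (abs_le.1 (hMΦ _ (hs.isStop.1 s hsP) s hsP)).2
  linarith [(inv_mul_le_iff₀ hS).1 hscaled]

theorem exists_sum_abs_le_of_isSubHedge
    (hAss : ∀ (H : ℕ → (ℕ → ℝ) → ℝ) (h : Fin e → ℝ), AdaptedOn P H → h ≠ 0 →
      ∃ s ∈ P, gains T H s + ∑ i, h i * g s i < 0)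
    (hΦ : ∀ t ≤ T, ∀ s s', |Φ t s - Φ t s'| ≤ L * supDist T s s')
    (hg : ∀ i s s', |g s i - g s' i| ≤ L * supDist T s s') (hL : 0 ≤ L)
    (hMΦ : ∀ t ≤ T, ∀ s ∈ P, |Φ t s| ≤ M) (hMg : ∀ s ∈ P, ∀ i, |g s i| ≤ M) (hM : 0 ≤ M)
    (hE : 0 ≤ E) :
    ∃ N r₀, 0 ≤ N ∧ 0 < r₀ ∧ r₀ ≤ 1 ∧ ∀ (A : Set (ℕ → ℝ)) ψ (c : Fin e → ℝ) r H h τ x,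
      r ≤ r₀ → IsDiscretization T P A ψ r → StrategyBound T A E → (∀ i, |c i| ≤ r) →
      IsSubHedge T A Φ g c H h τ x → -M ≤ x → ∑ i, |h i| ≤ N := by
  -- `N₁` bounds `|H|` per unit of `∑ |hᵢ|`; `N` and `r₀` are chosen so that a sub-hedge with
  -- `∑ |hᵢ| > N` would satisfy `ε ∑ |hᵢ| ≤ 4 M`.
  set N₁ := (2 * M + (M + 1)) * E with hN₁_def
  have hN₁ : 0 ≤ N₁ := mul_nonneg (by linarith) hE
  obtain ⟨ε, hε, hloss⟩ := exists_uniform_loss hAss N₁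
  have hC₁ : 0 < 2 * L + 2 * T * N₁ + 1 := by
    linarith [mul_nonneg (mul_nonneg zero_le_two T.cast_nonneg) hN₁]
  refine ⟨max 1 (4 * M / ε), min 1 (ε / (2 * (2 * L + 2 * T * N₁ + 1))),
    zero_le_one.trans (le_max_left _ _), lt_min one_pos (by positivity), min_le_left _ _, ?_⟩
  intro A ψ c r H h τ x hr hψ hAE hc hs hx
  by_contra! hN
  set S := ∑ i, |h i| with hS_def
  have hS1 : 1 ≤ S := (le_max_left _ _).trans hN.le
  have hεS : 4 * M < ε * S := (div_lt_iff₀' hε).1 ((le_max_right _ _).trans_lt hN)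
  have hrε : r * (2 * (2 * L + 2 * T * N₁ + 1)) ≤ ε :=
    (le_div_iff₀ (by positivity)).1 (hr.trans (min_le_right _ _))
  obtain ⟨i₀, -, hi₀⟩ := exists_ne_zero_of_sum_ne_zero (one_pos.trans_le hS1).ne'
  have hr0 : 0 ≤ r := (abs_nonneg _).trans (hc i₀)
  have hgc : ∀ s ∈ A, ∀ i, |g s i - c i| ≤ M + 1 := fun s hsA i => (abs_sub _ _).trans
    (add_le_add (hMg s (hψ.subset hsA) i) ((hc i).trans (hr.trans (min_le_left _ _))))
  have hH : ∀ t < T, ∀ σ ∈ A, |H t σ| ≤ S * N₁ := fun t ht σ hσ => by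
    refine (hs.abs_le_of_strategyBound hAE (fun t ht s hsA => hMΦ t ht s (hψ.subset hsA)) hgc hM
      (by linarith) hx t ht σ hσ).trans ?_
    rw [hN₁_def, ← mul_assoc]
    exact mul_le_mul_of_nonneg_right (by nlinarith) hE
  have hlift := (hs.comp hψ hΦ hg hL hH).change_price (c' := 0) (r := r) (by simpa using hc)
  have hεS' := mul_sum_abs_le_of_uniform_loss hloss hlift hMΦ (one_pos.trans_le hS1)
    fun t ht s hsP => hH t ht _ (hψ.mapsTo hsP)
  linarith [le_mul_of_one_le_left (mul_nonneg hL hr0) hS1,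
    mul_le_mul_of_nonneg_left hrε (zero_le_one.trans hS1)]

theorem exists_abs_subPrice_sub_le
    (hAss : ∀ (H : ℕ → (ℕ → ℝ) → ℝ) (h : Fin e → ℝ), AdaptedOn P H → h ≠ 0 →
      ∃ s ∈ P, gains T H s + ∑ i, h i * g s i < 0)
    (hΦ : ∀ t ≤ T, ∀ s s', |Φ t s - Φ t s'| ≤ L * supDist T s s')
    (hg : ∀ i s s', |g s i - g s' i| ≤ L * supDist T s s') (hL : 0 ≤ L)
    (hMΦ : ∀ t ≤ T, ∀ s ∈ P, |Φ t s| ≤ M) (hMg : ∀ s ∈ P, ∀ i, |g s i| ≤ M) (hM : 0 ≤ M)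
    (hE : 0 ≤ E) (hPE : StrategyBound T P E) :
    ∃ K r₀, 0 < r₀ ∧ ∀ (A : Set (ℕ → ℝ)) ψ (c : Fin e → ℝ) r, r ≤ r₀ →
      IsDiscretization T P A ψ r → StrategyBound T A E → (fun _ => (1 : ℝ)) ∈ A →
      (∀ i, |c i| ≤ r) → |subPrice T e A Φ g c - subPrice T e P Φ g 0| ≤ K * r := by
  obtain ⟨N, r₀, hN, hr₀, hr₀1, hbound⟩ :=
    exists_sum_abs_le_of_isSubHedge hAss hΦ hg hL hMΦ hMg hM hE
  set C := (2 * M + N * (M + 1)) * E with hC_def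
  have hC : 0 ≤ C := mul_nonneg (by positivity) hE
  set K := L + 2 * T * C + N * L + N with hK_def
  have hNK : N ≤ K := by
    linarith [mul_nonneg hN hL, mul_nonneg (mul_nonneg zero_le_two T.cast_nonneg) hC]
  have hliftK : ∀ S ≤ N, ∀ r ≥ 0, (L + 2 * T * C + S * L + S) * r ≤ K * r :=
    fun S hS r hr => by rw [hK_def]; gcongr
  have hboundP := fun H h τ x => hbound P id 0 0 H h τ x hr₀.le (.refl T P) hPE (by simp)
  have hgP : ∀ s ∈ P, ∀ i, |g s i - (0 : Fin e → ℝ) i| ≤ M + 1 := fun s hs i => by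
    simpa using (hMg s hs i).trans (le_add_of_nonneg_right zero_le_one)
  refine ⟨K, r₀, hr₀, fun A ψ c r hr hψ hAE h1 hc => ?_⟩
  have hr0 : 0 ≤ r := (abs_nonneg _).trans (hψ.abs_sub_le _ (hψ.subset h1) 0 T.zero_le)
  have hΦA : ∀ t ≤ T, ∀ s ∈ A, |Φ t s| ≤ M := fun t ht s hs => hMΦ t ht s (hψ.subset hs)
  have hgA : ∀ s ∈ A, ∀ i, |g s i - c i| ≤ M + 1 := fun s hs i =>
    (abs_sub _ _).trans (add_le_add (hMg s (hψ.subset hs) i) ((hc i).trans (hr.trans hr₀1)))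
  have hboundA := fun H h τ x => hbound A ψ c r H h τ x hr hψ hAE hc
  rw [subPrice_eq_sSup, subPrice_eq_sSup, abs_sub_le_iff, sub_le_iff_le_add', sub_le_iff_le_add']
  constructor
  · refine csSup_le_csSup_add (neg_mem_subHedgeLevels hMΦ) ⟨_, neg_mem_subHedgeLevels hΦA⟩
      (bddAbove_subHedgeLevels (hψ.subset h1) hMΦ hgP (by linarith) hboundP)
      (mul_nonneg (hN.trans hNK) hr0) fun x ⟨H, h, τ, hs⟩ hx => ?_
    have hS := hboundA H h τ x hs hx.le
    have hH : ∀ t < T, ∀ σ ∈ A, |H t σ| ≤ C := fun t ht σ hσ =>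
      (hs.abs_le_of_strategyBound hAE hΦA hgA hM (by linarith) hx.le t ht σ hσ).trans
        (by rw [hC_def]; gcongr)
    refine ⟨_, _, _, ((hs.comp hψ hΦ hg hL hH).change_price (c' := 0) (r := r)
      (by simpa using hc)).mono_level ?_⟩
    linarith [hliftK _ hS r hr0]
  · refine csSup_le_csSup_add (neg_mem_subHedgeLevels hΦA) ⟨_, neg_mem_subHedgeLevels hMΦ⟩
      (bddAbove_subHedgeLevels h1 hΦA hgA (by linarith) hboundA)
      (mul_nonneg (hN.trans hNK) hr0) fun x ⟨H, h, τ, hs⟩ hx => ?_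
    have hS := hboundP H h τ x hs hx.le
    refine ⟨_, _, _, ((hs.restrict hψ.subset).change_price (c' := c) (r := r)
      (by simpa using hc)).mono_level ?_⟩
    linarith [mul_le_mul_of_nonneg_right (hS.trans hNK) hr0]

end Pricing

lemma update_mem_pathSpace {T : ℕ} {a b s : ℕ → ℝ} (hs : s ∈ pathSpace T a b) {m : ℕ} (hm : m ≠ 0)
    {x : ℝ} (hx : a m ≤ x ∧ x ≤ b m) : Function.update s m x ∈ pathSpace T a b := by
  refine ⟨by rw [Function.update_of_ne hm.symm]; exact hs.1, fun i hi hiT => ?_⟩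
  rcases eq_or_ne i m with rfl | him
  · rwa [Function.update_self]
  · rw [Function.update_of_ne him]; exact hs.2 i hi hiT

def IsDyadic (n : ℕ) (x : ℝ) : Prop := ∃ k : ℕ, x = k / 2 ^ n

lemma IsDyadic.nonneg {n : ℕ} {x : ℝ} (hx : IsDyadic n x) : 0 ≤ x := by
  obtain ⟨k, rfl⟩ := hx; positivity

lemma IsDyadic.mono {m n : ℕ} {x : ℝ} (hx : IsDyadic m x) (h : m ≤ n) : IsDyadic n x := by
  obtain ⟨k, rfl⟩ := hx
  obtain ⟨d, rfl⟩ := Nat.exists_eq_add_of_le h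
  refine ⟨k * 2 ^ d, ?_⟩
  push_cast
  rw [pow_add]
  field_simp

lemma isDyadic_one (n : ℕ) : IsDyadic n 1 :=
  ⟨2 ^ n, by push_cast; rw [div_self (by positivity)]⟩

lemma eventually_forall_isDyadic {T : ℕ} {x : ℕ → ℝ} (hx : ∀ i ≤ T, ∃ k m : ℕ, x i = k / 2 ^ m) :
    ∀ᶠ n in atTop, ∀ i ≤ T, IsDyadic n (x i) :=
  (eventually_all_finite (Set.finite_Iic T)).2 fun i hi =>
    let ⟨k, m, hxi⟩ := hx i hi
    eventually_atTop.2 ⟨m, fun _ hn => IsDyadic.mono ⟨k, hxi⟩ hn⟩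

lemma update_mem_gridSpace {T n : ℕ} {a b s : ℕ → ℝ} (hs : s ∈ gridSpace T n a b) {m : ℕ}
    (hm : m ≠ 0) {x : ℝ} (hx : a m ≤ x ∧ x ≤ b m) (hxd : IsDyadic n x) :
    Function.update s m x ∈ gridSpace T n a b := by
  refine ⟨update_mem_pathSpace hs.1 hm hx, fun j hj => ?_⟩
  rcases eq_or_ne j m with rfl | hjm
  · rwa [Function.update_self]
  · rw [Function.update_of_ne hjm]; exact hs.2 j hj

/-- The paper's `φⁿ`: on `Ω` every coordinate is nonnegative, so `⌊·⌋₊` is the usual floor and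
the coordinate `0` stays `1`. -/
noncomputable def dyadicProj (n : ℕ) (s : ℕ → ℝ) : ℕ → ℝ := fun j => ⌊2 ^ n * s j⌋₊ / 2 ^ n

section DyadicProj

variable {n j : ℕ} {s : ℕ → ℝ}

lemma dyadicProj_le (hs : 0 ≤ s j) : dyadicProj n s j ≤ s j := by
  rw [dyadicProj, div_le_iff₀ (by positivity), mul_comm]
  exact Nat.floor_le (by positivity)

lemma le_dyadicProj {x : ℝ} (hx : IsDyadic n x) (h : x ≤ s j) : x ≤ dyadicProj n s j := by
  obtain ⟨k, rfl⟩ := hx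
  rw [dyadicProj]
  gcongr
  exact Nat.le_floor (by rwa [div_le_iff₀ (by positivity), mul_comm] at h)

lemma abs_dyadicProj_sub_le (hs : 0 ≤ s j) : |dyadicProj n s j - s j| ≤ 1 / 2 ^ n := by
  rw [abs_sub_comm, abs_of_nonneg (sub_nonneg.2 (dyadicProj_le hs)), sub_le_iff_le_add,
    dyadicProj, ← add_div, le_div_iff₀ (by positivity), mul_comm]
  linarith [Nat.lt_floor_add_one (2 ^ n * s j)]

end DyadicProj

structure PathBox (T : ℕ) (a b : ℕ → ℝ) : Prop where
  a_zero : a 0 = 1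
  b_zero : b 0 = 1
  strictAntiOn_a : StrictAntiOn a (Set.Iic T)
  strictMonoOn_b : StrictMonoOn b (Set.Iic T)

namespace PathBox

variable {T : ℕ} {a b : ℕ → ℝ}

lemma le_one (hab : PathBox T a b) {j : ℕ} (hj : j ≤ T) : a j ≤ 1 :=
  hab.a_zero ▸ hab.strictAntiOn_a.antitoneOn (Set.mem_Iic.2 T.zero_le) hj j.zero_le

lemma one_le (hab : PathBox T a b) {j : ℕ} (hj : j ≤ T) : 1 ≤ b j :=
  hab.b_zero ▸ hab.strictMonoOn_b.monotoneOn (Set.mem_Iic.2 T.zero_le) hj j.zero_le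

lemma bounds_of_mem (hab : PathBox T a b) {s : ℕ → ℝ} (hs : s ∈ pathSpace T a b) {j : ℕ}
    (hj : j ≤ T) : a j ≤ s j ∧ s j ≤ b j := by
  rcases j.eq_zero_or_pos with rfl | hj0
  · rw [hs.1, hab.a_zero, hab.b_zero]; exact ⟨le_rfl, le_rfl⟩
  · exact hs.2 j hj0 hj

lemma abs_sub_le_of_mem (hab : PathBox T a b) {s s' : ℕ → ℝ} (hs : s ∈ pathSpace T a b)
    (hs' : s' ∈ pathSpace T a b) {j j' : ℕ} (hj : j ≤ T) (hj' : j' ≤ T) :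
    |s j - s' j'| ≤ b T - a T := by
  have hTj := hab.strictAntiOn_a.antitoneOn hj (Set.mem_Iic.2 le_rfl) hj
  have hTj' := hab.strictAntiOn_a.antitoneOn hj' (Set.mem_Iic.2 le_rfl) hj'
  have hjT := hab.strictMonoOn_b.monotoneOn hj (Set.mem_Iic.2 le_rfl) hj
  have hjT' := hab.strictMonoOn_b.monotoneOn hj' (Set.mem_Iic.2 le_rfl) hj'
  have := hab.bounds_of_mem hs hj
  have := hab.bounds_of_mem hs' hj'
  rw [abs_le]; constructor <;> linarith

lemma one_mem (hab : PathBox T a b) : (fun _ => (1 : ℝ)) ∈ pathSpace T a b :=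
  ⟨rfl, fun _ _ hi => ⟨hab.le_one hi, hab.one_le hi⟩⟩

lemma exists_gap (hab : PathBox T a b) :
    ∃ δ > 0, ∀ t < T, δ ≤ a t - a (t + 1) ∧ δ ≤ b (t + 1) - b t := by
  have hpos : ∀ t ∈ range T, 0 < min (a t - a (t + 1)) (b (t + 1) - b t) := fun t ht => by
    have ht : t < T := mem_range.1 ht
    have ha := hab.strictAntiOn_a (Set.mem_Iic.2 ht.le) (Set.mem_Iic.2 ht) t.lt_succ_self
    have hb := hab.strictMonoOn_b (Set.mem_Iic.2 ht.le) (Set.mem_Iic.2 ht) t.lt_succ_self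
    exact lt_min (by linarith) (by linarith)
  have hev : ∀ᶠ δ in 𝓝[>] (0 : ℝ), ∀ t ∈ range T, δ ≤ min (a t - a (t + 1)) (b (t + 1) - b t) :=
    (eventually_all_finset _).2 fun t ht => nhdsWithin_le_nhds (eventually_le_nhds (hpos t ht))
  obtain ⟨δ, hδ, hδ0⟩ := (hev.and self_mem_nhdsWithin).exists
  exact ⟨δ, hδ0, fun t ht => le_min_iff.1 (hδ t (mem_range.2 ht))⟩

lemma updateClosed_pathSpace (hab : PathBox T a b) : UpdateClosed T a b (pathSpace T a b) :=
  fun _ hs t ht =>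
    have hab' := (hab.le_one ht).trans (hab.one_le ht)
    ⟨update_mem_pathSpace hs t.succ_ne_zero ⟨le_rfl, hab'⟩,
      update_mem_pathSpace hs t.succ_ne_zero ⟨hab', le_rfl⟩⟩

lemma updateClosed_gridSpace (hab : PathBox T a b) {n : ℕ} (ha : ∀ j ≤ T, IsDyadic n (a j))
    (hb : ∀ j ≤ T, IsDyadic n (b j)) : UpdateClosed T a b (gridSpace T n a b) :=
  fun _ hs t ht =>
    have hab' := (hab.le_one ht).trans (hab.one_le ht)
    ⟨update_mem_gridSpace hs t.succ_ne_zero ⟨le_rfl, hab'⟩ (ha _ ht),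
      update_mem_gridSpace hs t.succ_ne_zero ⟨hab', le_rfl⟩ (hb _ ht)⟩

lemma exists_strategyBound (hab : PathBox T a b) :
    ∃ E, 0 ≤ E ∧ ∀ A ⊆ pathSpace T a b, UpdateClosed T a b A → StrategyBound T A E := by
  obtain ⟨δ, hδ, hgap⟩ := hab.exists_gap
  have hD : 0 ≤ b T - a T := (hab.le_one le_rfl).trans (hab.one_le le_rfl) |> sub_nonneg.2
  exact ⟨_, by positivity, fun A hAP hA => strategyBound_of_updateClosed hA
    (fun s hs t ht => hab.bounds_of_mem (hAP hs) ht.le) hgap hδ hD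
    fun s hs u hu => hab.abs_sub_le_of_mem (hAP hs) (hAP hs) hu hu.le⟩

lemma abs_le_of_abs_sub_le (hab : PathBox T a b) {f : (ℕ → ℝ) → ℝ} {L : ℝ}
    (hf : ∀ s s', |f s - f s'| ≤ L * supDist T s s') (hL : 0 ≤ L) {s : ℕ → ℝ}
    (hs : s ∈ pathSpace T a b) : |f s| ≤ |f fun _ => 1| + L * (b T - a T) := by
  have hdist : L * supDist T s (fun _ => 1) ≤ L * (b T - a T) := mul_le_mul_of_nonneg_left
    (supDist_le fun j hj => hab.abs_sub_le_of_mem hs hab.one_mem hj hj) hL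
  linarith [abs_sub_abs_le_abs_sub (f s) (f fun _ => 1), hf s fun _ => 1]

lemma exists_bound {e : ℕ} (hab : PathBox T a b) {Φ : ℕ → (ℕ → ℝ) → ℝ}
    {g : (ℕ → ℝ) → Fin e → ℝ} {L : ℝ} (hΦ : ∀ t ≤ T, ∀ s s', |Φ t s - Φ t s'| ≤ L * supDist T s s')
    (hg : ∀ i s s', |g s i - g s' i| ≤ L * supDist T s s') (hL : 0 ≤ L) :
    ∃ M, 0 ≤ M ∧ (∀ t ≤ T, ∀ s ∈ pathSpace T a b, |Φ t s| ≤ M) ∧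
      ∀ s ∈ pathSpace T a b, ∀ i, |g s i| ≤ M := by
  have hD : 0 ≤ b T - a T := sub_nonneg.2 ((hab.le_one le_rfl).trans (hab.one_le le_rfl))
  have hΦ1 := fun t (ht : t ≤ T) => single_le_sum (fun t _ => abs_nonneg (Φ t fun _ => 1))
    (mem_range_succ_iff.2 ht)
  have hg1 := fun i => single_le_sum (fun i _ => abs_nonneg (g (fun _ => 1) i)) (mem_univ i)
  have hΦ0 : 0 ≤ ∑ t ∈ range (T + 1), |Φ t fun _ => 1| := sum_nonneg fun _ _ => abs_nonneg _
  have hg0 : 0 ≤ ∑ i, |g (fun _ => 1) i| := sum_nonneg fun _ _ => abs_nonneg _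
  refine ⟨∑ t ∈ range (T + 1), |Φ t fun _ => 1| + ∑ i, |g (fun _ => 1) i| + L * (b T - a T),
    by positivity, fun t ht s hs => ?_, fun s hs i => ?_⟩
  · linarith [hab.abs_le_of_abs_sub_le (hΦ t ht) hL hs, hΦ1 t ht]
  · linarith [hab.abs_le_of_abs_sub_le (fun s s' => hg i s s') hL hs, hg1 i]

lemma isDiscretization_gridSpace (hab : PathBox T a b) {n : ℕ} (ha : ∀ j ≤ T, IsDyadic n (a j)) :
    IsDiscretization T (pathSpace T a b) (gridSpace T n a b) (dyadicProj n) (1 / 2 ^ n) := by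
  have hnonneg : ∀ s ∈ pathSpace T a b, ∀ j ≤ T, 0 ≤ s j := fun s hs j hj =>
    (ha j hj).nonneg.trans (hab.bounds_of_mem hs hj).1
  refine ⟨fun s hs => hs.1, fun s hs => ⟨⟨?_, fun i hi hiT => ?_⟩, fun j _ => ⟨_, rfl⟩⟩,
    fun s s' t h j hj => by simp only [dyadicProj, h j hj],
    fun s hs j hj => abs_dyadicProj_sub_le (hnonneg s hs j hj)⟩
  · exact le_antisymm (hs.1 ▸ dyadicProj_le (hnonneg s hs 0 T.zero_le))
      (le_dyadicProj (isDyadic_one n) hs.1.ge)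
  · exact ⟨le_dyadicProj (ha i hiT) (hs.2 i hi hiT).1,
      (dyadicProj_le (hnonneg s hs i hiT)).trans (hs.2 i hi hiT).2⟩

end PathBox

/-- Optimal rate of convergence of the discretized sub-hedging prices:
if `Φ` and `g` are Lipschitz, the standing no-arbitrage assumptions hold, and the
discretized option prices satisfy `|cⁿ| = O(2⁻ⁿ)`, then
`|πⁿ(Φ) - π(Φ)| = O(2⁻ⁿ)`. -/
theorem stmt18 (T e : ℕ) (a b : ℕ → ℝ)
    (ha0 : a 0 = 1) (hb0 : b 0 = 1)
    (hadec : ∀ i, 1 ≤ i → i ≤ T → a i < a (i - 1))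
    (hbinc : ∀ i, 1 ≤ i → i ≤ T → b (i - 1) < b i)
    (hady : ∀ i ≤ T, ∃ k m : ℕ, a i = (k : ℝ) / 2 ^ m)
    (hbdy : ∀ i ≤ T, ∃ k m : ℕ, b i = (k : ℝ) / 2 ^ m)
    (Φ : ℕ → (ℕ → ℝ) → ℝ) (g : (ℕ → ℝ) → Fin e → ℝ)
    (L : ℝ)
    (hΦLip : ∀ t ≤ T, ∀ s s' : ℕ → ℝ,
      |Φ t s - Φ t s'| ≤ L * (Finset.range (T + 1)).sup' (by simp) fun j => |s j - s' j|)
    (hgLip : ∀ i : Fin e, ∀ s s' : ℕ → ℝ,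
      |g s i - g s' i| ≤ L * (Finset.range (T + 1)).sup' (by simp) fun j => |s j - s' j|)
    (hAss : ∀ (H : ℕ → (ℕ → ℝ) → ℝ) (h : Fin e → ℝ), AdaptedOn (pathSpace T a b) H →
      h ≠ 0 → ∃ s ∈ pathSpace T a b, gains T H s + ∑ i, h i * g s i < 0)
    (c : ℕ → Fin e → ℝ) (K₀ : ℝ) (hc : ∀ n : ℕ, ‖c n‖ ≤ K₀ / 2 ^ n) :
    ∃ (K : ℝ) (n₀ : ℕ), ∀ n ≥ n₀,
      |subPrice T e (gridSpace T n a b) Φ g (c n) -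
        subPrice T e (pathSpace T a b) Φ g 0| ≤ K / 2 ^ n := by
  have hab : PathBox T a b := ⟨ha0, hb0,
    strictAntiOn_Iic_of_succ_lt fun i hi => by simpa using hadec (i + 1) (by omega) (by omega),
    strictMonoOn_Iic_of_lt_succ fun i hi => by simpa using hbinc (i + 1) (by omega) (by omega)⟩
  have hL := nonneg_of_abs_sub_le_mul_supDist (hΦLip 0 T.zero_le)
  obtain ⟨M, hM, hΦM, hgM⟩ := hab.exists_bound hΦLip hgLip hL
  obtain ⟨E, hE, hAE⟩ := hab.exists_strategyBound
  obtain ⟨K, r₀, hr₀, hK⟩ := exists_abs_subPrice_sub_le hAss hΦLip hgLip hL hΦM hgM hM hE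
    (hAE _ subset_rfl hab.updateClosed_pathSpace)
  have hsmall : ∀ᶠ n : ℕ in atTop, max 1 K₀ / 2 ^ n ≤ r₀ :=
    (tendsto_const_nhds.div_atTop (tendsto_pow_atTop_atTop_of_one_lt one_lt_two)).eventually
      (Iic_mem_nhds hr₀)
  obtain ⟨n₀, hn₀⟩ := eventually_atTop.1 ((eventually_forall_isDyadic hady).and
    ((eventually_forall_isDyadic hbdy).and hsmall))
  refine ⟨K * max 1 K₀, n₀, fun n hn => ?_⟩
  obtain ⟨ha, hb, hr⟩ := hn₀ n hn
  have hcn : ∀ i, |c n i| ≤ max 1 K₀ / 2 ^ n := fun i =>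
    (norm_le_pi_norm (c n) i).trans ((hc n).trans (by gcongr; exact le_max_right _ _))
  rw [mul_div_assoc]
  exact hK _ _ _ _ hr ((hab.isDiscretization_gridSpace ha).mono (by gcongr; exact le_max_left _ _))
    (hAE _ (fun s hs => hs.1) (hab.updateClosed_gridSpace ha hb))
    ⟨hab.one_mem, fun _ _ => isDyadic_one n⟩ hcn
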